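/- The image of the regular representation of G(X) under the functor F : G(X)-Rep → M(X) is isomorphic to the vacuum object V_K; explicitly, in the Fourier-transformed basis (k, c) = Σ_{χ∈K*} χ(k)(χ, c), the induced grading and action are P^R(m)(k̃, Ig̃) = δ(m^{g̃}, k̃)(k̃, Ig̃) for m ∈ K (zero for m ∉ K) and Q^R(g)(k̃, Ig̃) = (k̃, Igg̃), matching the structure of V_K. -/

import Mathlib

/-- A crossed module: groups `X₁`, `X₂`, a right action of `X₁` on `X₂` by group
automorphisms (written `act m g` for `m^g`), and a boundary homomorphism
`δ : X₂ →* X₁` satisfying equivariance and the Peiffer identity. -/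
structure CrossedModule (X₁ X₂ : Type) [Group X₁] [Group X₂] where
  act : X₂ → X₁ → X₂
  act_one : ∀ m : X₂, act m 1 = m
  act_mul : ∀ (m : X₂) (g h : X₁), act m (g * h) = act (act m g) h
  act_hom : ∀ (m n : X₂) (g : X₁), act (m * n) g = act m g * act n g
  δ : X₂ →* X₁
  equivariance : ∀ (m : X₂) (g : X₁), δ (act m g) = g⁻¹ * δ m * g
  peiffer : ∀ m n : X₂, act m (δ n) = n⁻¹ * m * n

section Representations
open TensorProduct

variable {F : Type} [Field F] {X₁ X₂ : Type} [Group X₁] [Group X₂] [Fintype X₁] [Fintype X₂] [DecidableEq X₂]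

/-- A representation of the crossed module `X` on the `F`-vector space `V`:
an `X₂`-grading, encoded by the family of projections `P m` onto the graded
components, together with an `X₁`-action `Q` such that `P(m)Q(g) = Q(g)P(m^g)`.
These are the objects of the category `M(X)`. -/
structure XRep (F : Type) [Field F] {X₁ X₂ : Type} [Group X₁] [Group X₂] [Fintype X₂] [DecidableEq X₂]
    (X : CrossedModule X₁ X₂)
    (V : Type) [AddCommGroup V] [Module F V] where
  P : X₂ → (V →ₗ[F] V)
  Q : X₁ → (V →ₗ[F] V)
  P_orth : ∀ m n : X₂, (P m) ∘ₗ (P n) = if m = n then P m else 0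
  P_total : (∑ m : X₂, P m) = LinearMap.id
  Q_one : Q 1 = LinearMap.id
  Q_mul : ∀ g h : X₁, Q (g * h) = Q g ∘ₗ Q h
  PQ_compat : ∀ (m : X₂) (g : X₁), (P m) ∘ₗ (Q g) = (Q g) ∘ₗ (P (X.act m g))

variable {X : CrossedModule X₁ X₂}
variable {U V W U' V' W' : Type}
  [AddCommGroup U] [Module F U] [AddCommGroup V] [Module F V] [AddCommGroup W] [Module F W]
  [AddCommGroup U'] [Module F U'] [AddCommGroup V'] [Module F V'] [AddCommGroup W'] [Module F W']

/-- The grading of the tensor product: `(V ⊗ W)_m = ⊕_{nl = m} V_n ⊗ W_l`. -/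
noncomputable def tensorP (A : XRep F X V) (B : XRep F X W) (m : X₂) :
    (V ⊗[F] W) →ₗ[F] (V ⊗[F] W) :=
  ∑ n : X₂, TensorProduct.map (A.P n) (B.P (n⁻¹ * m))

/-- The diagonal `X₁`-action on the tensor product. -/
noncomputable def tensorQ (A : XRep F X V) (B : XRep F X W) (g : X₁) :
    (V ⊗[F] W) →ₗ[F] (V ⊗[F] W) :=
  TensorProduct.map (A.Q g) (B.Q g)

/-- The braiding `R_{V,W}(v ⊗ w) = ∑_{m ∈ X₂} Q_W(∂m) w ⊗ P_V(m) v`, written in terms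
of the grading data `PA` on `V` and the action data `QB` on `W`. -/
noncomputable def braidAux (X : CrossedModule X₁ X₂)
    (PA : X₂ → (V →ₗ[F] V)) (QB : X₁ → (W →ₗ[F] W)) :
    (V ⊗[F] W) →ₗ[F] (W ⊗[F] V) :=
  ∑ m : X₂, (TensorProduct.map (QB (X.δ m)) (PA m)) ∘ₗ
    (TensorProduct.comm F V W).toLinearMap

/-- The braiding `R_{V,W}` between two crossed-module representations. -/
noncomputable def braid (A : XRep F X V) (B : XRep F X W) :
    (V ⊗[F] W) →ₗ[F] (W ⊗[F] V) :=
  braidAux X A.P B.Q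

/-- Morphisms in `M(X)`: linear maps compatible with the grading and the action. -/
def IsXRepHom (A : XRep F X V) (B : XRep F X W) (f : V →ₗ[F] W) : Prop :=
  (∀ m : X₂, f ∘ₗ A.P m = B.P m ∘ₗ f) ∧ (∀ g : X₁, f ∘ₗ A.Q g = B.Q g ∘ₗ f)

end Representations

section Vacuum

variable (F : Type) [Field F] {X₁ X₂ : Type} [Group X₁] [Group X₂]
  [Fintype X₁] [Fintype X₂] [DecidableEq X₂]
  (X : CrossedModule X₁ X₂) [X.δ.range.Normal]

/-- The underlying vector space `k[ker ∂] ⊗ k(coker ∂)` of the vacuum object,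
realized as the space of `F`-valued functions on `(ker ∂) × (coker ∂)`;
the basis vector `x ⊗ δ_{Iy}` corresponds to the indicator function of `(x, Iy)`. -/
abbrev VacuumCarrier : Type := (X.δ.ker × (X₁ ⧸ X.δ.range)) → F

/-- The grading projections of the vacuum object,
`P(m)(x ⊗ δ_{Iy}) = δ(m^y, x) (x ⊗ δ_{Iy})`, defined via a choice of coset
representative. -/
noncomputable def vacuumP (m : X₂) : VacuumCarrier F X →ₗ[F] VacuumCarrier F X where
  toFun f := fun p => if X.act m (Quotient.out p.2) = (p.1 : X₂) then f p else 0
  map_add' f g := by funext p; by_cases h : X.act m (Quotient.out p.2) = (p.1 : X₂) <;> simp [h]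
  map_smul' c f := by funext p; by_cases h : X.act m (Quotient.out p.2) = (p.1 : X₂) <;> simp [h]

/-- The `X₁`-action of the vacuum object, `Q(g)(x ⊗ δ_{Iy}) = x ⊗ δ_{Igy}`. -/
def vacuumQ (g : X₁) : VacuumCarrier F X →ₗ[F] VacuumCarrier F X where
  toFun f := fun p => f (p.1, (QuotientGroup.mk g)⁻¹ * p.2)
  map_add' f g := by funext p; simp
  map_smul' c f := by funext p; simp

end Vacuum

section GX

variable {X₁ X₂ : Type} [Group X₁] [Group X₂]

lemma CrossedModule.one_act (X : CrossedModule X₁ X₂) (g : X₁) : X.act 1 g = 1 := by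
  have h := X.act_hom 1 1 g
  rw [mul_one] at h
  exact (left_eq_mul.mp h)

/-- The action of `X₁` on `X₂` preserves `ker ∂`, giving an action on the kernel. -/
def CrossedModule.kerAct (X : CrossedModule X₁ X₂) (k : X.δ.ker) (g : X₁) : X.δ.ker :=
  ⟨X.act (k : X₂) g, by
    have hk : X.δ (k : X₂) = 1 := k.2
    simp [MonoidHom.mem_ker, X.equivariance, hk]⟩

lemma CrossedModule.kerAct_one (X : CrossedModule X₁ X₂) (g : X₁) :
    X.kerAct 1 g = 1 := by
  apply Subtype.ext
  show X.act ((1 : X.δ.ker) : X₂) g = ((1 : X.δ.ker) : X₂)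
  simpa using X.one_act g

lemma CrossedModule.kerAct_mul (X : CrossedModule X₁ X₂) (k k' : X.δ.ker) (g : X₁) :
    X.kerAct (k * k') g = X.kerAct k g * X.kerAct k' g := by
  apply Subtype.ext
  simpa [CrossedModule.kerAct] using X.act_hom (k : X₂) (k' : X₂) g

variable (F : Type) [Field F] (X : CrossedModule X₁ X₂) [X.δ.range.Normal]

/-- The character group `(ker ∂)* = Hom(ker ∂, F^×)` of the abelian group `ker ∂`. -/
abbrev KChar : Type := X.δ.ker →* Fˣ

/-- The cokernel `coker ∂ = X₁ / Im ∂`. -/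
abbrev Coker : Type := X₁ ⧸ X.δ.range

/-- The dual action `μ̂` of `coker ∂` on `(ker ∂)*`: `(χ^c)(k) = χ(k^{c⁻¹})`,
computed via a coset representative. -/
noncomputable def dualActQ (c : Coker X) (χ : KChar F X) : KChar F X where
  toFun k := χ (X.kerAct k (Quotient.out c)⁻¹)
  map_one' := by rw [X.kerAct_one, map_one]
  map_mul' k k' := by rw [X.kerAct_mul, map_mul]

variable {V : Type} [AddCommGroup V] [Module F V]

/-- `ρ` is a representation of the group `G(X) = (ker ∂)* ⋊_{μ̂} (coker ∂)` on `V`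
(with the semidirect product multiplication
`(χ, c) · (χ', c') = (χ^{c'} χ', c c')`). -/
def IsGRep (ρ : KChar F X × Coker X → (V →ₗ[F] V)) : Prop :=
  ρ (1, 1) = LinearMap.id ∧
  ∀ (χ χ' : KChar F X) (c c' : Coker X),
    ρ (dualActQ F X c' χ * χ', c * c') = ρ (χ, c) ∘ₗ ρ (χ', c')

variable [Fintype X₂] [DecidableEq X₂]
open Classical in

/-- The grading part of the functor `F : G(X)-Rep → M(X)`:
`P^ρ(m) = (1/|K|) ∑_{χ ∈ K*} χ(m) ρ(χ, I)` for `m ∈ K = ker ∂`, and `0` otherwise. -/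
noncomputable def FobP (ρ : KChar F X × Coker X → (V →ₗ[F] V)) (m : X₂) :
    V →ₗ[F] V :=
  if h : m ∈ X.δ.ker then
    (Nat.card X.δ.ker : F)⁻¹ • ∑ᶠ χ : KChar F X, ((χ ⟨m, h⟩ : Fˣ) : F) • ρ (χ, 1)
  else 0

/-- The action part of the functor `F : G(X)-Rep → M(X)`: `Q^ρ(g) = ρ(1, Ig)`. -/
def FobQ (ρ : KChar F X × Coker X → (V →ₗ[F] V)) (g : X₁) : V →ₗ[F] V :=
  ρ (1, QuotientGroup.mk g)

end GX

section Regular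

variable (F : Type) [Field F] {X₁ X₂ : Type} [Group X₁] [Group X₂]
  (X : CrossedModule X₁ X₂) [X.δ.range.Normal]

/-- The carrier `k(G(X))` of the regular representation of `G(X)`. -/
abbrev RegCarrier : Type := (KChar F X × Coker X) → F

open Classical in
/-- The regular representation of `G(X)` on `k(G(X))`, acting on the basis of
idempotents by `ρ_R(χ, c)(χ̃, c̃) = (χ^{c̃} χ̃, c c̃)`, written on coefficient
functions. -/
noncomputable def regRep (p : KChar F X × Coker X) :
    RegCarrier F X →ₗ[F] RegCarrier F X where
  toFun f := fun q => f ((dualActQ F X (p.2⁻¹ * q.2) p.1)⁻¹ * q.1, p.2⁻¹ * q.2)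
  map_add' f g := by funext q; simp
  map_smul' c f := by funext q; simp

open Classical in
/-- The partial Fourier transform basis `(k, c) = ∑_{χ ∈ K*} χ(k)(χ, c)` of
`k(G(X))`. -/
noncomputable def gxFourierBasis (k : X.δ.ker) (c : Coker X) : RegCarrier F X :=
  fun p => if p.2 = c then ((p.1 k : Fˣ) : F) else 0

end Regular


section AuxProofs

variable {X₁ X₂ : Type} [Group X₁] [Group X₂]

/-- Elements of `ker ∂` are central in `X₂`. -/
lemma CrossedModule.ker_central (X : CrossedModule X₁ X₂) {u : X₂} (hu : u ∈ X.δ.ker)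
    (v : X₂) : u * v = v * u := by
  have h := X.peiffer v u
  rw [show X.δ u = 1 from hu, X.act_one] at h
  have h2 : u * v = u * (u⁻¹ * v * u) := by rw [← h]
  simpa [mul_assoc] using h2

lemma CrossedModule.act_delta (X : CrossedModule X₁ X₂) {u : X₂} (hu : u ∈ X.δ.ker)
    (n : X₂) : X.act u (X.δ n) = u := by
  rw [X.peiffer, mul_assoc, X.ker_central hu n, ← mul_assoc, inv_mul_cancel, one_mul]

lemma CrossedModule.kerAct_id (X : CrossedModule X₁ X₂) (k : X.δ.ker) : X.kerAct k 1 = k :=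
  Subtype.ext (X.act_one _)

lemma CrossedModule.kerAct_comp (X : CrossedModule X₁ X₂) (k : X.δ.ker) (g h : X₁) :
    X.kerAct (X.kerAct k g) h = X.kerAct k (g * h) :=
  Subtype.ext (X.act_mul _ g h).symm

lemma CrossedModule.kerAct_congr (X : CrossedModule X₁ X₂) (k : X.δ.ker) {g h : X₁}
    (hgh : (QuotientGroup.mk g : X₁ ⧸ X.δ.range) = QuotientGroup.mk h) :
    X.kerAct k g = X.kerAct k h := by
  obtain ⟨n, hn⟩ := QuotientGroup.eq.mp hgh
  have hh : h = g * X.δ n := by rw [hn]; group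
  apply Subtype.ext
  show X.act (k : X₂) g = X.act (k : X₂) h
  rw [hh, X.act_mul]
  exact (X.act_delta (X.kerAct k g).2 n).symm

/-- `ker ∂` is commutative. -/
@[reducible] noncomputable def kerCommGroup (X : CrossedModule X₁ X₂) : CommGroup X.δ.ker :=
  { (inferInstance : Group X.δ.ker) with
    mul_comm := fun a b => Subtype.ext (X.ker_central a.2 (b : X₂)) }

variable (F : Type) [Field F] (X : CrossedModule X₁ X₂) [X.δ.range.Normal]

lemma mk_out_coker (c : X₁ ⧸ X.δ.range) :
    (QuotientGroup.mk (Quotient.out c) : X₁ ⧸ X.δ.range) = c := Quotient.out_eq c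

lemma dualActQ_apply (c : Coker X) (χ : KChar F X) (k : X.δ.ker) :
    dualActQ F X c χ k = χ (X.kerAct k (Quotient.out c)⁻¹) := rfl

lemma dualActQ_one (c : Coker X) : dualActQ F X c (1 : KChar F X) = 1 := by
  ext k; simp [dualActQ_apply]

lemma kchar_one_inv_mul (ψ : KChar F X) : (1 : KChar F X)⁻¹ * ψ = ψ := by
  ext k
  simp [MonoidHom.mul_apply, MonoidHom.inv_apply]

lemma dualActQ_mul (c : Coker X) (χ ψ : KChar F X) :
    dualActQ F X c (χ * ψ) = dualActQ F X c χ * dualActQ F X c ψ := by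
  ext k; simp [dualActQ_apply, MonoidHom.mul_apply]

lemma dualActQ_mk (g : X₁) (χ : KChar F X) (k : X.δ.ker) :
    dualActQ F X (QuotientGroup.mk g) χ k = χ (X.kerAct k g⁻¹) := by
  rw [dualActQ_apply]
  congr 1
  refine X.kerAct_congr k ?_
  rw [QuotientGroup.mk_inv, QuotientGroup.mk_inv, mk_out_coker]

lemma dualActQ_dualActQ (c d : Coker X) (χ : KChar F X) :
    dualActQ F X d (dualActQ F X c χ) = dualActQ F X (c * d) χ := by
  ext k
  rw [dualActQ_apply, dualActQ_apply, dualActQ_apply, X.kerAct_comp]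
  have harg : X.kerAct k ((Quotient.out d)⁻¹ * (Quotient.out c)⁻¹)
      = X.kerAct k (Quotient.out (c * d))⁻¹ := by
    refine X.kerAct_congr k ?_
    rw [QuotientGroup.mk_mul, QuotientGroup.mk_inv, QuotientGroup.mk_inv, QuotientGroup.mk_inv,
      mk_out_coker, mk_out_coker, mk_out_coker, mul_inv_rev]
  rw [harg]

/-- Evaluation of characters at a fixed element, as a homomorphism. -/
def evalChar (a : X.δ.ker) : KChar F X →* Fˣ where
  toFun χ := χ a
  map_one' := rfl
  map_mul' _ _ := rfl

lemma sum_hom_eq_zero {F : Type} [Field F] {A : Type} [Group A] [Fintype A]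
    (φ : A →* Fˣ) {a₀ : A} (h : φ a₀ ≠ 1) :
    ∑ a : A, ((φ a : Fˣ) : F) = 0 := by
  have h2 : ((φ a₀ : Fˣ) : F) ≠ 1 := fun hc => h (Units.ext (by rw [hc, Units.val_one]))
  refine eq_zero_of_mul_eq_self_left h2 ?_
  rw [Finset.mul_sum]
  calc ∑ a : A, ((φ a₀ : Fˣ) : F) * ((φ a : Fˣ) : F)
      = ∑ a : A, ((φ (a₀ * a) : Fˣ) : F) := by simp [map_mul]
    _ = ∑ a : A, ((φ a : Fˣ) : F) :=
        Equiv.sum_comp (Equiv.mulLeft a₀) (fun a => ((φ a : Fˣ) : F))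

/-- The partial inverse Fourier transform `RegCarrier → VacuumCarrier`. -/
noncomputable def regToVac [Fintype (KChar F X)] :
    RegCarrier F X →ₗ[F] VacuumCarrier F X where
  toFun f p := (Nat.card X.δ.ker : F)⁻¹ *
    ∑ χ : KChar F X, (((χ p.1)⁻¹ : Fˣ) : F) * f (χ, p.2)
  map_add' f g := by
    funext p
    simp only [Pi.add_apply, mul_add, Finset.sum_add_distrib]
  map_smul' a f := by
    funext p
    simp only [Pi.smul_apply, smul_eq_mul, RingHom.id_apply]
    rw [Finset.mul_sum, Finset.mul_sum, Finset.mul_sum]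
    exact Finset.sum_congr rfl fun χ _ => by ring

/-- The partial Fourier transform `VacuumCarrier → RegCarrier`. -/
noncomputable def vacToReg [Fintype X.δ.ker] :
    VacuumCarrier F X →ₗ[F] RegCarrier F X where
  toFun h q := ∑ x : X.δ.ker, ((q.1 x : Fˣ) : F) * h (x, q.2)
  map_add' f g := by
    funext q
    simp only [Pi.add_apply, mul_add, Finset.sum_add_distrib]
  map_smul' a f := by
    funext q
    simp only [Pi.smul_apply, smul_eq_mul, RingHom.id_apply]
    rw [Finset.mul_sum]
    exact Finset.sum_congr rfl fun x _ => by ring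

lemma regToVac_apply [Fintype (KChar F X)] (f : RegCarrier F X) (p) :
    regToVac F X f p = (Nat.card X.δ.ker : F)⁻¹ *
      ∑ χ : KChar F X, (((χ p.1)⁻¹ : Fˣ) : F) * f (χ, p.2) := rfl

lemma vacToReg_apply [Fintype X.δ.ker] (h : VacuumCarrier F X) (q) :
    vacToReg F X h q = ∑ x : X.δ.ker, ((q.1 x : Fˣ) : F) * h (x, q.2) := rfl

end AuxProofs

set_option maxHeartbeats 2000000 in
/-- The image of the regular representation of `G(X)` under the functor
`F : G(X)-Rep → M(X)` is isomorphic to the vacuum object `V_K`; explicitly, in the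
Fourier-transformed basis `(k̃, Ig̃)` the induced grading and action are
`P^R(m)(k̃, Ig̃) = δ(m^{g̃}, k̃)(k̃, Ig̃)` for `m ∈ K` (zero for `m ∉ K`) and
`Q^R(g)(k̃, Ig̃) = (k̃, Igg̃)`, matching the structure of `V_K`. -/
theorem regular_rep_gives_vacuum {F : Type} [Field F] [IsAlgClosed F] [CharZero F]
    {X₁ X₂ : Type} [Group X₁] [Group X₂] [Fintype X₁] [Fintype X₂] [DecidableEq X₂]
    (X : CrossedModule X₁ X₂) [X.δ.range.Normal] :
    -- the regular representation is a `G(X)`-representation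
    IsGRep F X (regRep F X) ∧
    -- explicit grading on the Fourier basis
    (∀ (m : X₂) (_ : m ∈ X.δ.ker) (k : X.δ.ker) (g' : X₁),
      FobP F X (regRep F X) m (gxFourierBasis F X k (QuotientGroup.mk g')) =
        if X.act m g' = (k : X₂) then gxFourierBasis F X k (QuotientGroup.mk g')
        else 0) ∧
    (∀ m : X₂, m ∉ X.δ.ker → FobP F X (regRep F X) m = 0) ∧
    -- explicit action on the Fourier basis
    (∀ (g : X₁) (k : X.δ.ker) (g' : X₁),
      FobQ F X (regRep F X) g (gxFourierBasis F X k (QuotientGroup.mk g')) =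
        gxFourierBasis F X k (QuotientGroup.mk (g * g'))) ∧
    -- `F(k(G(X)))` is isomorphic to the vacuum object `V_K`
    (∃ T : RegCarrier F X ≃ₗ[F] VacuumCarrier F X,
      (∀ m : X₂, T.toLinearMap ∘ₗ FobP F X (regRep F X) m =
        vacuumP F X m ∘ₗ T.toLinearMap) ∧
      (∀ g : X₁, T.toLinearMap ∘ₗ FobQ F X (regRep F X) g =
        vacuumQ F X g ∘ₗ T.toLinearMap)) := by
  classical
  have e : KChar F X ≃ X.δ.ker := by
    letI : CommGroup X.δ.ker := kerCommGroup X
    haveI : NeZero ((Monoid.exponent X.δ.ker : F)) :=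
      ⟨Nat.cast_ne_zero.mpr Monoid.exponent_ne_zero_of_finite⟩
    exact (CommGroup.monoidHom_mulEquiv_of_hasEnoughRootsOfUnity X.δ.ker F).some.toEquiv
  have hsep : ∀ a : X.δ.ker, a ≠ 1 → ∃ χ : KChar F X, χ a ≠ 1 := by
    letI : CommGroup X.δ.ker := kerCommGroup X
    haveI : NeZero ((Monoid.exponent X.δ.ker : F)) :=
      ⟨Nat.cast_ne_zero.mpr Monoid.exponent_ne_zero_of_finite⟩
    exact fun a ha => CommGroup.exists_apply_ne_one_of_hasEnoughRootsOfUnity X.δ.ker F ha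
  haveI : Finite (KChar F X) := Finite.of_equiv _ e.symm
  haveI : Fintype (KChar F X) := Fintype.ofFinite _
  haveI : Fintype X.δ.ker := Fintype.ofFinite _
  have hK0 : (Nat.card X.δ.ker : F) ≠ 0 := Nat.cast_ne_zero.mpr Nat.card_pos.ne'
  -- first orthogonality: sum over characters
  have orth : ∀ a : X.δ.ker, ∑ χ : KChar F X, ((χ a : Fˣ) : F) =
      if a = 1 then (Nat.card X.δ.ker : F) else 0 := by
    intro a
    split_ifs with ha
    · subst ha
      simp only [map_one, Units.val_one, Finset.sum_const, Finset.card_univ, nsmul_eq_mul,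
        mul_one]
      rw [← Nat.card_eq_fintype_card, Nat.card_congr e]
    · obtain ⟨χ₀, hχ₀⟩ := hsep a ha
      exact sum_hom_eq_zero (evalChar F X a) (a₀ := χ₀) hχ₀
  -- second orthogonality: sum over elements
  have orth2 : ∀ η : KChar F X, ∑ x : X.δ.ker, ((η x : Fˣ) : F) =
      if η = 1 then (Nat.card X.δ.ker : F) else 0 := by
    intro η
    split_ifs with hη
    · subst hη; simp [Nat.card_eq_fintype_card]
    · have hex : ∃ a, η a ≠ 1 := by
        by_contra hc
        push_neg at hc
        exact hη (MonoidHom.ext fun a => by rw [hc a, MonoidHom.one_apply])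
      obtain ⟨a₀, ha₀⟩ := hex
      exact sum_hom_eq_zero η ha₀
  -- condition translation
  have hcond : ∀ (m : X₂) (hm : m ∈ X.δ.ker) (k : X.δ.ker) (g' : X₁),
      ((⟨m, hm⟩ : X.δ.ker) = X.kerAct k g'⁻¹) ↔ X.act m g' = (k : X₂) := by
    intro m hm k g'
    constructor
    · intro h
      have h2 : X.kerAct ⟨m, hm⟩ g' = k := by
        rw [h, X.kerAct_comp, inv_mul_cancel, X.kerAct_id]
      exact congrArg Subtype.val h2
    · intro h
      have h2 : X.kerAct ⟨m, hm⟩ g' = k := Subtype.ext h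
      rw [← h2, X.kerAct_comp, mul_inv_cancel, X.kerAct_id]
  -- generic evaluation of FobP
  have hFobP : ∀ (m : X₂) (hm : m ∈ X.δ.ker) (f : RegCarrier F X) (ψ : KChar F X) (c : Coker X),
      FobP F X (regRep F X) m f (ψ, c)
        = (Nat.card X.δ.ker : F)⁻¹ *
            ∑ χ : KChar F X, ((χ ⟨m, hm⟩ : Fˣ) : F) * f ((dualActQ F X c χ)⁻¹ * ψ, c) := by
    intro m hm f ψ c
    simp only [FobP]
    rw [dif_pos hm, finsum_eq_sum_of_fintype]
    simp only [LinearMap.smul_apply, LinearMap.coe_sum, Finset.sum_apply, Pi.smul_apply,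
      smul_eq_mul, regRep, LinearMap.coe_mk, AddHom.coe_mk, inv_one, one_mul]
  refine ⟨⟨?_, ?_⟩, ?_, ?_, ?_, ?_⟩
  · -- regRep (1,1) = id
    apply LinearMap.ext; intro f; funext q
    obtain ⟨ψ, c⟩ := q
    simp only [regRep, LinearMap.coe_mk, AddHom.coe_mk, LinearMap.id_coe, id_eq,
      dualActQ_one, kchar_one_inv_mul, inv_one, one_mul]
  · -- multiplicativity
    intro χ χ' c c'
    apply LinearMap.ext; intro f; funext q
    obtain ⟨ψ, d⟩ := q
    simp only [regRep, LinearMap.coe_mk, AddHom.coe_mk, LinearMap.comp_apply]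
    have e2 : (c * c')⁻¹ * d = c'⁻¹ * (c⁻¹ * d) := by group
    rw [e2]
    have e3 : c' * (c'⁻¹ * (c⁻¹ * d)) = c⁻¹ * d := by group
    have hfst : (dualActQ F X (c'⁻¹ * (c⁻¹ * d)) (dualActQ F X c' χ * χ'))⁻¹ * ψ
        = (dualActQ F X (c'⁻¹ * (c⁻¹ * d)) χ')⁻¹ * ((dualActQ F X (c⁻¹ * d) χ)⁻¹ * ψ) := by
      rw [dualActQ_mul, dualActQ_dualActQ, e3]
      ext u
      simp [MonoidHom.mul_apply, MonoidHom.inv_apply, Units.val_mul, Units.val_inv_eq_inv_val,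
        mul_inv_rev, mul_comm, mul_left_comm, mul_assoc]
    rw [hfst]
  · -- FobP on the Fourier basis, m ∈ ker
    intro m hm k g'
    funext q
    obtain ⟨ψ, c⟩ := q
    rw [hFobP m hm]
    by_cases hc : c = QuotientGroup.mk g'
    · subst hc
      have hterm : ∀ χ : KChar F X,
          ((χ ⟨m, hm⟩ : Fˣ) : F) *
            gxFourierBasis F X k (QuotientGroup.mk g')
              ((dualActQ F X (QuotientGroup.mk g') χ)⁻¹ * ψ, QuotientGroup.mk g')
          = ((χ ((⟨m, hm⟩ : X.δ.ker) * (X.kerAct k g'⁻¹)⁻¹) : Fˣ) : F) * ((ψ k : Fˣ) : F) := by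
        intro χ
        have hB : gxFourierBasis F X k (QuotientGroup.mk g')
            ((dualActQ F X (QuotientGroup.mk g') χ)⁻¹ * ψ, QuotientGroup.mk g')
            = ((((dualActQ F X (QuotientGroup.mk g') χ)⁻¹ * ψ) k : Fˣ) : F) := if_pos rfl
        rw [hB]
        simp only [MonoidHom.mul_apply, MonoidHom.inv_apply, dualActQ_mk, map_mul, map_inv,
          Units.val_mul, Units.val_inv_eq_inv_val]
        ring
      rw [Finset.sum_congr rfl fun χ _ => hterm χ, ← Finset.sum_mul, orth]
      by_cases hmk : X.act m g' = (k : X₂)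
      · have h1 : (⟨m, hm⟩ : X.δ.ker) * (X.kerAct k g'⁻¹)⁻¹ = 1 := by
          rw [mul_inv_eq_one]; exact (hcond m hm k g').mpr hmk
        rw [if_pos h1, if_pos hmk]
        have hB : gxFourierBasis F X k (QuotientGroup.mk g') (ψ, QuotientGroup.mk g')
            = ((ψ k : Fˣ) : F) := if_pos rfl
        rw [hB, ← mul_assoc, inv_mul_cancel₀ hK0, one_mul]
      · have h1 : ¬((⟨m, hm⟩ : X.δ.ker) * (X.kerAct k g'⁻¹)⁻¹ = 1) := by
          rw [mul_inv_eq_one]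
          intro h; exact hmk ((hcond m hm k g').mp h)
        rw [if_neg h1, if_neg hmk]
        simp
    · have hz : ∀ χ : KChar F X,
          ((χ ⟨m, hm⟩ : Fˣ) : F) *
            gxFourierBasis F X k (QuotientGroup.mk g')
              ((dualActQ F X c χ)⁻¹ * ψ, c) = 0 := by
        intro χ
        simp [gxFourierBasis, hc]
      rw [Finset.sum_congr rfl fun χ _ => hz χ]
      by_cases hmk : X.act m g' = (k : X₂) <;>
        simp [hmk, gxFourierBasis, hc]
  · -- FobP vanishes for m ∉ ker
    intro m hm
    simp [FobP, hm]
  · -- FobQ on the Fourier basis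
    intro g k g'
    funext q
    obtain ⟨ψ, c⟩ := q
    simp only [FobQ, regRep, LinearMap.coe_mk, AddHom.coe_mk, gxFourierBasis,
      dualActQ_one, kchar_one_inv_mul, inv_one, one_mul]
    simp [inv_mul_eq_iff_eq_mul, QuotientGroup.mk_mul]
    congr
  · -- the isomorphism with the vacuum object
    set N : F := (Nat.card X.δ.ker : F) with hN
    -- T ∘ S = id
    have hTS : regToVac F X ∘ₗ vacToReg F X = LinearMap.id := by
      apply LinearMap.ext; intro h; funext p
      obtain ⟨x, c⟩ := p
      simp only [LinearMap.comp_apply, LinearMap.id_coe, id_eq, regToVac_apply, vacToReg_apply]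
      have step : ∀ χ : KChar F X,
          (((χ x)⁻¹ : Fˣ) : F) * ∑ y : X.δ.ker, ((χ y : Fˣ) : F) * h (y, c)
            = ∑ y : X.δ.ker, ((χ (x⁻¹ * y) : Fˣ) : F) * h (y, c) := by
        intro χ
        rw [Finset.mul_sum]
        exact Finset.sum_congr rfl fun y _ => by
          rw [map_mul, map_inv, Units.val_mul, Units.val_inv_eq_inv_val]; ring
      rw [Finset.sum_congr rfl fun χ _ => step χ, Finset.sum_comm]
      have step2 : ∀ y : X.δ.ker,
          ∑ χ : KChar F X, ((χ (x⁻¹ * y) : Fˣ) : F) * h (y, c)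
            = if x = y then N * h (y, c) else 0 := by
        intro y
        rw [← Finset.sum_mul, orth]
        by_cases hxy : x = y
        · subst hxy
          rw [if_pos (inv_mul_cancel x), if_pos rfl]
        · rw [if_neg (fun hone => hxy (inv_mul_eq_one.mp hone)), if_neg hxy, zero_mul]
      rw [Finset.sum_congr rfl fun y _ => step2 y, Finset.sum_ite_eq]
      simp only [Finset.mem_univ, if_true]
      rw [← mul_assoc, inv_mul_cancel₀ hK0, one_mul]
    -- S ∘ T = id
    have hST : vacToReg F X ∘ₗ regToVac F X = LinearMap.id := by
      apply LinearMap.ext; intro f; funext q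
      obtain ⟨χ, c⟩ := q
      simp only [LinearMap.comp_apply, LinearMap.id_coe, id_eq, regToVac_apply, vacToReg_apply]
      have step : ∀ x : X.δ.ker,
          ((χ x : Fˣ) : F) * (N⁻¹ * ∑ ψ : KChar F X, (((ψ x)⁻¹ : Fˣ) : F) * f (ψ, c))
            = N⁻¹ * ∑ ψ : KChar F X, (((χ * ψ⁻¹) x : Fˣ) : F) * f (ψ, c) := by
        intro x
        rw [Finset.mul_sum, Finset.mul_sum, Finset.mul_sum]
        exact Finset.sum_congr rfl fun ψ _ => by
          simp only [MonoidHom.mul_apply, MonoidHom.inv_apply, Units.val_mul,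
            Units.val_inv_eq_inv_val]
          ring
      rw [Finset.sum_congr rfl fun x _ => step x, ← Finset.mul_sum, Finset.sum_comm]
      have step2 : ∀ ψ : KChar F X,
          ∑ x : X.δ.ker, (((χ * ψ⁻¹) x : Fˣ) : F) * f (ψ, c)
            = if χ = ψ then N * f (ψ, c) else 0 := by
        intro ψ
        rw [← Finset.sum_mul, orth2]
        by_cases hch : χ = ψ
        · subst hch
          rw [if_pos (mul_inv_cancel χ), if_pos rfl]
        · rw [if_neg (fun hone => hch (mul_inv_eq_one.mp hone)), if_neg hch, zero_mul]
      rw [Finset.sum_congr rfl fun ψ _ => step2 ψ, Finset.sum_ite_eq]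
      simp only [Finset.mem_univ, if_true]
      rw [← mul_assoc, inv_mul_cancel₀ hK0, one_mul]
    -- vacuumP vanishes off the kernel
    have hvacP0 : ∀ m : X₂, m ∉ X.δ.ker → vacuumP F X m = 0 := by
      intro m hm
      apply LinearMap.ext; intro f; funext p
      simp only [vacuumP, LinearMap.coe_mk, AddHom.coe_mk, LinearMap.zero_apply, Pi.zero_apply]
      rw [if_neg]
      intro hEq
      apply hm
      have h1 : X.δ (X.act m (Quotient.out p.2)) = 1 := by
        rw [hEq]; exact p.1.2
      rw [X.equivariance] at h1
      have h2 := congrArg (fun w => (Quotient.out p.2) * w * (Quotient.out p.2)⁻¹) h1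
      simpa [mul_assoc, MonoidHom.mem_ker] using h2
    -- intertwining for FobP via S
    have hPS : ∀ m : X₂, FobP F X (regRep F X) m ∘ₗ vacToReg F X
        = vacToReg F X ∘ₗ vacuumP F X m := by
      intro m
      by_cases hm : m ∈ X.δ.ker
      · apply LinearMap.ext; intro h; funext q
        obtain ⟨ψ, c⟩ := q
        simp only [LinearMap.comp_apply]
        rw [hFobP m hm]
        have step : ∀ χ : KChar F X,
            ((χ ⟨m, hm⟩ : Fˣ) : F) * vacToReg F X h ((dualActQ F X c χ)⁻¹ * ψ, c)
              = ∑ y : X.δ.ker,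
                  ((χ ((⟨m, hm⟩ : X.δ.ker) * (X.kerAct y (Quotient.out c)⁻¹)⁻¹) : Fˣ) : F) *
                    (((ψ y : Fˣ) : F) * h (y, c)) := by
          intro χ
          rw [vacToReg_apply, Finset.mul_sum]
          exact Finset.sum_congr rfl fun y _ => by
            simp only [MonoidHom.mul_apply, MonoidHom.inv_apply, dualActQ_apply,
              map_mul, map_inv, Units.val_mul, Units.val_inv_eq_inv_val]
            ring
        rw [Finset.sum_congr rfl fun χ _ => step χ, Finset.sum_comm]
        have step2 : ∀ y : X.δ.ker,
            ∑ χ : KChar F X,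
                ((χ ((⟨m, hm⟩ : X.δ.ker) * (X.kerAct y (Quotient.out c)⁻¹)⁻¹) : Fˣ) : F) *
                  (((ψ y : Fˣ) : F) * h (y, c))
              = if X.act m (Quotient.out c) = (y : X₂) then
                  N * (((ψ y : Fˣ) : F) * h (y, c)) else 0 := by
          intro y
          rw [← Finset.sum_mul, orth]
          by_cases hcnd : X.act m (Quotient.out c) = (y : X₂)
          · rw [if_pos hcnd, if_pos]
            rw [mul_inv_eq_one]
            exact (hcond m hm y (Quotient.out c)).mpr hcnd
          · rw [if_neg hcnd, if_neg, zero_mul]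
            rw [mul_inv_eq_one]
            intro h1
            exact hcnd ((hcond m hm y (Quotient.out c)).mp h1)
        rw [Finset.sum_congr rfl fun y _ => step2 y, Finset.mul_sum]
        rw [vacToReg_apply]
        refine Finset.sum_congr rfl fun y _ => ?_
        simp only [vacuumP, LinearMap.coe_mk, AddHom.coe_mk]
        by_cases hcnd : X.act m (Quotient.out c) = (y : X₂)
        · rw [if_pos hcnd, if_pos hcnd, ← mul_assoc, inv_mul_cancel₀ hK0, one_mul]
        · rw [if_neg hcnd, if_neg hcnd, mul_zero, mul_zero]
      · rw [show FobP F X (regRep F X) m = 0 by simp [FobP, hm], hvacP0 m hm]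
        simp
    -- intertwining for FobQ via S
    have hQS : ∀ g : X₁, FobQ F X (regRep F X) g ∘ₗ vacToReg F X
        = vacToReg F X ∘ₗ vacuumQ F X g := by
      intro g
      apply LinearMap.ext; intro h; funext q
      obtain ⟨ψ, c⟩ := q
      simp only [LinearMap.comp_apply, FobQ, regRep, LinearMap.coe_mk, AddHom.coe_mk,
        dualActQ_one, kchar_one_inv_mul, inv_one, one_mul]
      rw [vacToReg_apply, vacToReg_apply]
      refine Finset.sum_congr rfl fun y _ => ?_
      simp [vacuumQ]
    refine ⟨LinearEquiv.ofLinear (regToVac F X) (vacToReg F X) hTS hST, ?_, ?_⟩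
    · intro m
      show regToVac F X ∘ₗ FobP F X (regRep F X) m = vacuumP F X m ∘ₗ regToVac F X
      calc regToVac F X ∘ₗ FobP F X (regRep F X) m
          = regToVac F X ∘ₗ (FobP F X (regRep F X) m ∘ₗ (vacToReg F X ∘ₗ regToVac F X)) := by
            rw [hST, LinearMap.comp_id]
        _ = regToVac F X ∘ₗ ((FobP F X (regRep F X) m ∘ₗ vacToReg F X) ∘ₗ regToVac F X) := by
            rw [LinearMap.comp_assoc]
        _ = regToVac F X ∘ₗ ((vacToReg F X ∘ₗ vacuumP F X m) ∘ₗ regToVac F X) := by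
            rw [hPS]
        _ = (regToVac F X ∘ₗ vacToReg F X) ∘ₗ (vacuumP F X m ∘ₗ regToVac F X) := by
            simp only [← LinearMap.comp_assoc]
        _ = vacuumP F X m ∘ₗ regToVac F X := by
            rw [hTS, LinearMap.id_comp]
    · intro g
      show regToVac F X ∘ₗ FobQ F X (regRep F X) g = vacuumQ F X g ∘ₗ regToVac F X
      calc regToVac F X ∘ₗ FobQ F X (regRep F X) g
          = regToVac F X ∘ₗ (FobQ F X (regRep F X) g ∘ₗ (vacToReg F X ∘ₗ regToVac F X)) := by
            rw [hST, LinearMap.comp_id]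
        _ = regToVac F X ∘ₗ ((FobQ F X (regRep F X) g ∘ₗ vacToReg F X) ∘ₗ regToVac F X) := by
            rw [LinearMap.comp_assoc]
        _ = regToVac F X ∘ₗ ((vacToReg F X ∘ₗ vacuumQ F X g) ∘ₗ regToVac F X) := by
            rw [hQS]
        _ = (regToVac F X ∘ₗ vacToReg F X) ∘ₗ (vacuumQ F X g ∘ₗ regToVac F X) := by
            simp only [← LinearMap.comp_assoc]
        _ = vacuumQ F X g ∘ₗ regToVac F X := by
            rw [hTS, LinearMap.id_comp]
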